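/- arXiv:2505.09058 — 2 statements merged into one kernel-verified Lean document; each statement's English description precedes it below -/
import Mathlib

section
/- Suppose real numbers v, h0 and γ > 0 satisfy the pointwise R-CLVF variational inequality max( h0 − v , (⨅_{u ∈ U} ⨆_{d ∈ D} ⟪p, F + G·u + W·d⟫) + γ·v ) = 0, and suppose v > h0. Let d* ∈ D be a maximizer over D of the map d ↦ ⟪p, W·d⟫. Then the stabilize admissible control set { u ∈ U : ⟪p, G·u⟫ < −γ·v − ⟪p, F + W·d*⟫ } is empty. (Proposition 1 of the paper.) -/
open Matrix

/-- Proposition 1: if the pointwise R-CLVF variational inequality holds and `v > h0`,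
then the stabilize admissible control set is empty. -/
theorem stabilize_ACS_empty {n m k : ℕ}
    (p F : Fin n → ℝ)
    (G : Matrix (Fin n) (Fin m) ℝ) (W : Matrix (Fin n) (Fin k) ℝ)
    (U : Set (Fin m → ℝ)) (D : Set (Fin k → ℝ))
    (hUne : U.Nonempty) (hUc : IsCompact U)
    (hDne : D.Nonempty) (hDc : IsCompact D)
    (v h0 γ : ℝ) (hγ : 0 < γ)
    (hVI : max (h0 - v)
      ((⨅ u : U, ⨆ d : D, p ⬝ᵥ (F + G.mulVec ↑u + W.mulVec ↑d)) + γ * v) = 0)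
    (hv : h0 < v)
    (dstar : Fin k → ℝ) (hdstar : dstar ∈ D)
    (hmax : ∀ d ∈ D, p ⬝ᵥ W.mulVec d ≤ p ⬝ᵥ W.mulVec dstar) :
    {u ∈ U | p ⬝ᵥ G.mulVec u < -γ * v - p ⬝ᵥ (F + W.mulVec dstar)} = ∅ := by
  set S : (Fin m → ℝ) → ℝ := fun u => p ⬝ᵥ (F + G.mulVec u + W.mulVec dstar) with hS
  -- the inner sup equals the value at dstar
  have hsup : ∀ u : Fin m → ℝ,
      (⨆ d : D, p ⬝ᵥ (F + G.mulVec u + W.mulVec ↑d)) = S u := by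
    intro u
    haveI : Nonempty D := hDne.to_subtype
    have hbdd : BddAbove (Set.range fun d : D => p ⬝ᵥ (F + G.mulVec u + W.mulVec ↑d)) := by
      refine ⟨S u, ?_⟩
      rintro x ⟨d, rfl⟩
      have := hmax d d.2
      simp only [hS, dotProduct_add]
      linarith
    refine le_antisymm (ciSup_le fun d => ?_) ?_
    · have := hmax d d.2
      simp only [hS, dotProduct_add]
      linarith
    · exact le_ciSup hbdd ⟨dstar, hdstar⟩
  -- S is continuous
  have hScont : Continuous S := by
    have : S = fun u => p ⬝ᵥ F + (vecMul p G) ⬝ᵥ u + p ⬝ᵥ W.mulVec dstar := by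
      funext u
      simp [hS, dotProduct_add, dotProduct_mulVec]
    rw [this]
    have : Continuous fun u : Fin m → ℝ => (vecMul p G) ⬝ᵥ u := by
      unfold dotProduct
      exact continuous_finset_sum _ fun i _ =>
        (continuous_const.mul (continuous_apply i))
    exact (continuous_const.add this).add continuous_const
  have hbddI : BddBelow (Set.range fun u : U => S ↑u) := by
    have : Set.range (fun u : U => S ↑u) = S '' U := by
      ext x; simp [Set.image, Set.range]
    rw [this]
    exact (hUc.image hScont).bddBelow
  -- the variational inequality gives the value of the inf
  have hIeq : (⨅ u : U, ⨆ d : D, p ⬝ᵥ (F + G.mulVec ↑u + W.mulVec ↑d)) + γ * v = 0 := by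
    rcases max_cases (h0 - v)
      ((⨅ u : U, ⨆ d : D, p ⬝ᵥ (F + G.mulVec ↑u + W.mulVec ↑d)) + γ * v) with
      ⟨h1, h2⟩ | ⟨h1, h2⟩
    · linarith [hVI ▸ h1]
    · linarith [hVI ▸ h1]
  have hIeq' : (⨅ u : U, S ↑u) = -(γ * v) := by
    have : (⨅ u : U, ⨆ d : D, p ⬝ᵥ (F + G.mulVec ↑u + W.mulVec ↑d)) = ⨅ u : U, S ↑u := by
      exact iInf_congr fun u => hsup u
    rw [this] at hIeq
    linarith
  rw [Set.eq_empty_iff_forall_notMem]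
  rintro u0 ⟨hu0U, hu0⟩
  have hle : (⨅ u : U, S ↑u) ≤ S u0 := ciInf_le hbddI ⟨u0, hu0U⟩
  have : S u0 < -(γ * v) := by
    simp only [hS, dotProduct_add] at hu0 ⊢
    linarith
  linarith [hIeq' ▸ hle]
end

section
/- Suppose real numbers v and γ > 0 satisfy the pointwise R-CLVF variational inequality max( h0 − v , (⨅_{u ∈ U} ⨆_{d ∈ D} ⟪p, F + G·u + W·d⟫) + γ·v ) = 0 for some real h0, suppose v > 0, and let γ̂ be any real with 0 ≤ γ̂ < γ. Let d* ∈ D be a maximizer over D of d ↦ ⟪p, W·d⟫. Then the relaxed stabilize admissible control set { u ∈ U : ⟪p, G·u⟫ < −γ̂·v − ⟪p, F + W·d*⟫ } is nonempty. (Proposition 2 of the paper.) -/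
open Matrix

/-- Proposition 2: for any `0 ≤ γ̂ < γ`, the relaxed stabilize admissible
control set is nonempty. -/
theorem relaxed_stabilize_ACS_nonempty {n m k : ℕ}
    (p F : Fin n → ℝ)
    (G : Matrix (Fin n) (Fin m) ℝ) (W : Matrix (Fin n) (Fin k) ℝ)
    (U : Set (Fin m → ℝ)) (D : Set (Fin k → ℝ))
    (hUne : U.Nonempty) (hUc : IsCompact U)
    (hDne : D.Nonempty) (hDc : IsCompact D)
    (v γ : ℝ) (hγ : 0 < γ) (h0 : ℝ)
    (hVI : max (h0 - v)
      ((⨅ u : U, ⨆ d : D, p ⬝ᵥ (F + G.mulVec ↑u + W.mulVec ↑d)) + γ * v) = 0)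
    (hv : 0 < v)
    (γhat : ℝ) (hγhat₀ : 0 ≤ γhat) (hγhat : γhat < γ)
    (dstar : Fin k → ℝ) (hdstar : dstar ∈ D)
    (hmax : ∀ d ∈ D, p ⬝ᵥ W.mulVec d ≤ p ⬝ᵥ W.mulVec dstar) :
    {u ∈ U | p ⬝ᵥ G.mulVec u < -γhat * v - p ⬝ᵥ (F + W.mulVec dstar)}.Nonempty := by
  haveI : Nonempty U := hUne.to_subtype
  haveI : Nonempty D := hDne.to_subtype
  have hle : (⨅ u : U, ⨆ d : D, p ⬝ᵥ (F + G.mulVec ↑u + W.mulVec ↑d)) + γ * v ≤ 0 :=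
    le_of_max_le_right hVI.le
  have hmul : γhat * v < γ * v := mul_lt_mul_of_pos_right hγhat hv
  have hlt : (⨅ u : U, ⨆ d : D, p ⬝ᵥ (F + G.mulVec ↑u + W.mulVec ↑d)) < -γhat * v := by
    linarith
  obtain ⟨u, hu⟩ := exists_lt_of_ciInf_lt hlt
  refine ⟨u, u.2, ?_⟩
  have hbdd : BddAbove (Set.range fun d : D => p ⬝ᵥ (F + G.mulVec ↑u + W.mulVec ↑d)) := by
    refine ⟨p ⬝ᵥ (F + G.mulVec ↑u + W.mulVec dstar), ?_⟩
    rintro x ⟨d, rfl⟩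
    simp only [dotProduct_add]
    have := hmax d d.2
    linarith
  have hs : p ⬝ᵥ (F + G.mulVec ↑u + W.mulVec dstar) ≤
      ⨆ d : D, p ⬝ᵥ (F + G.mulVec ↑u + W.mulVec ↑d) :=
    le_ciSup hbdd (⟨dstar, hdstar⟩ : D)
  have h2 : p ⬝ᵥ (F + G.mulVec ↑u + W.mulVec dstar) < -γhat * v := lt_of_le_of_lt hs hu
  simp only [dotProduct_add] at h2 ⊢
  linarith
end
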